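/- For all integers i, j with i ≥ 1 and 0 ≤ j ≤ i, every graph in the family F_{i,j} is 2-connected; that is, it has at least three vertices and deleting any single vertex leaves the graph connected. -/

import Mathlib

open SimpleGraph

/-- The minimum size of a feedback vertex set of `G`. -/
noncomputable def phi {V : Type} (G : SimpleGraph V) : ℕ :=
  sInf {n : ℕ | ∃ S : Finset V, S.card = n ∧ (G.induce ((S : Set V)ᶜ)).IsAcyclic}

/-- The graph obtained from `H` by subdividing the edge `uv` once: delete the edge `uv`
and add a new vertex (`none`) adjacent exactly to `u` and `v`. -/
def subdivideEdge {V : Type} (H : SimpleGraph V) (u v : V) : SimpleGraph (Option V) :=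
  SimpleGraph.fromRel (fun x y =>
    (∃ p q : V, x = some p ∧ y = some q ∧ H.Adj p q ∧ s(p, q) ≠ s(u, v)) ∨
    (x = none ∧ (y = some u ∨ y = some v)))

/-- `a` has degree exactly two in `H`. -/
def HasDegreeTwo {V : Type} (H : SimpleGraph V) (a : V) : Prop :=
  ∃ x y : V, x ≠ y ∧ H.Adj a x ∧ H.Adj a y ∧ ∀ z : V, H.Adj a z → z = x ∨ z = y

/-- The operation `∘` applied with two distinct edges `u₁v₁`, `u₂v₂` and a degree-two vertex `a`:
subdivide both edges (new vertices `inr 0`, `inr 1`), then add a new vertex `inr 2` adjacent to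
`a` and the two subdivision vertices. -/
def circOpTwo {V : Type} (H : SimpleGraph V) (u₁ v₁ u₂ v₂ a : V) : SimpleGraph (V ⊕ Fin 3) :=
  SimpleGraph.fromRel (fun x y =>
    (∃ p q : V, x = Sum.inl p ∧ y = Sum.inl q ∧ H.Adj p q ∧
      s(p, q) ≠ s(u₁, v₁) ∧ s(p, q) ≠ s(u₂, v₂)) ∨
    (x = Sum.inr 0 ∧ (y = Sum.inl u₁ ∨ y = Sum.inl v₁)) ∨
    (x = Sum.inr 1 ∧ (y = Sum.inl u₂ ∨ y = Sum.inl v₂)) ∨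
    (x = Sum.inr 2 ∧ (y = Sum.inl a ∨ y = Sum.inr 0 ∨ y = Sum.inr 1)))

/-- The operation `∘` applied with `e₁ = e₂ = uv` and a degree-two vertex `a`: subdivide the
edge `uv` twice (replacing it by the path `u, inr 0, inr 1, v`), then add a new vertex `inr 2`
adjacent to `a` and the two subdivision vertices. -/
def circOpOne {V : Type} (H : SimpleGraph V) (u v a : V) : SimpleGraph (V ⊕ Fin 3) :=
  SimpleGraph.fromRel (fun x y =>
    (∃ p q : V, x = Sum.inl p ∧ y = Sum.inl q ∧ H.Adj p q ∧ s(p, q) ≠ s(u, v)) ∨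
    (x = Sum.inr 0 ∧ (y = Sum.inl u ∨ y = Sum.inr 1)) ∨
    (x = Sum.inr 1 ∧ y = Sum.inl v) ∨
    (x = Sum.inr 2 ∧ (y = Sum.inl a ∨ y = Sum.inr 0 ∨ y = Sum.inr 1)))

/-- `G` is obtained from `H` by one application of the operation `∘` at the degree-two
vertex `a`, using two (not necessarily distinct) edges of `H`. -/
def IsCircOp {V : Type} (H : SimpleGraph V) (a : V) (G : SimpleGraph (V ⊕ Fin 3)) : Prop :=
  (∃ u₁ v₁ u₂ v₂ : V, H.Adj u₁ v₁ ∧ H.Adj u₂ v₂ ∧ s(u₁, v₁) ≠ s(u₂, v₂) ∧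
      G = circOpTwo H u₁ v₁ u₂ v₂ a) ∨
  (∃ u v : V, H.Adj u v ∧ G = circOpOne H u v a)

/-- Membership (up to isomorphism) in the family `F_{i,j}`. -/
inductive IsInF : ∀ (i j : ℕ) {V : Type}, SimpleGraph V → Prop
  | cycle (i : ℕ) (hi : 3 ≤ i) : IsInF i 0 (SimpleGraph.cycleGraph i)
  | k4 : IsInF 1 1 (⊤ : SimpleGraph (Fin 4))
  | subdiv {i j : ℕ} {V : Type} {H : SimpleGraph V} {u v : V}
      (huv : H.Adj u v) (hH : IsInF i j H) : IsInF (i + 1) j (subdivideEdge H u v)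
  | op {i j : ℕ} {V : Type} {H : SimpleGraph V} {a : V} {G : SimpleGraph (V ⊕ Fin 3)}
      (ha : HasDegreeTwo H a) (hG : IsCircOp H a G) (hH : IsInF i j H) : IsInF i (j + 1) G
  | iso {i j : ℕ} {V W : Type} {H : SimpleGraph V} {G : SimpleGraph W}
      (e : Nonempty (G ≃g H)) (hH : IsInF i j H) : IsInF i j G

/-- `G` is a graph obtained from `H` by repeatedly (possibly zero times) subdividing edges. -/
inductive IsSubdivisionOf : ∀ {V : Type}, SimpleGraph V → ∀ {W : Type}, SimpleGraph W → Prop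
  | refl {V : Type} (G : SimpleGraph V) : IsSubdivisionOf G G
  | step {V W : Type} {H : SimpleGraph V} {G : SimpleGraph W} {u v : W}
      (huv : G.Adj u v) (h : IsSubdivisionOf H G) : IsSubdivisionOf H (subdivideEdge G u v)

/-- `G` contains an induced subdivision of `H`: some induced subgraph of `G` is isomorphic
to a graph obtained from `H` by repeatedly subdividing edges. -/
def ContainsInducedSubdivision {V W : Type} (G : SimpleGraph V) (H : SimpleGraph W) : Prop :=
  ∃ (s : Set V) (U : Type) (K : SimpleGraph U),
    IsSubdivisionOf H K ∧ Nonempty (G.induce s ≃g K)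

/-- The family `𝓕`: members of `F_{4,2} ∪ F_{4,3}` of girth at least five, together with
members `H` of `F_{3,2} ∪ F_{3,3}` having an edge `e` such that `H − e` has girth at least
five. -/
def InFamilyF {W : Type} (H : SimpleGraph W) : Prop :=
  ((IsInF 4 2 H ∨ IsInF 4 3 H) ∧ 5 ≤ H.girth) ∨
  ((IsInF 3 2 H ∨ IsInF 3 3 H) ∧ ∃ e ∈ H.edgeSet, 5 ≤ (H.deleteEdges {e}).girth)

/-- `G` contains two vertex-disjoint cycles, each of length less than five. -/
def HasTwoDisjointShortCycles {V : Type} (G : SimpleGraph V) : Prop :=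
  ∃ (u v : V) (c₁ : G.Walk u u) (c₂ : G.Walk v v), c₁.IsCycle ∧ c₂.IsCycle ∧
    c₁.length < 5 ∧ c₂.length < 5 ∧ ∀ x : V, x ∈ c₁.support → x ∉ c₂.support

/-!
Two-connectivity (at least three vertices and no cut vertex) is preserved by subdividing an
edge and by adding a vertex with two or more neighbours. Up to isomorphism, `H ∘ (e₁, e₂, a)`
is obtained from `H` by two subdivisions followed by adding a vertex adjacent to `a` and to the
two subdivision vertices, so an induction over the construction of `F_{i,j}` reduces the claim
to cycles and `K₄`.
-/

lemma exists_ne_ne_of_three_le_card {α : Type*} (h : 3 ≤ Nat.card α) (p q : α) :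
    ∃ z, z ≠ p ∧ z ≠ q := by
  have : Finite α := Nat.finite_of_card_ne_zero (by omega)
  by_contra! hc
  have : Nat.card α ≤ 2 := calc
    Nat.card α = (Set.univ : Set α).ncard := (Set.ncard_univ α).symm
    _ ≤ ({p, q} : Set α).ncard :=
      Set.ncard_le_ncard fun z _ => by simpa [or_iff_not_imp_left] using hc z
    _ ≤ 2 := (Set.ncard_insert_le p {q}).trans (by simp)
  omega

lemma Fin.succ_sub_succ_eq_one {m : ℕ} {a b : Fin (m + 1)} (h : a.val + 1 = b.val) :
    b.succ - a.succ = 1 := by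
  rw [sub_eq_iff_eq_add', Fin.ext_iff, Fin.val_add_one_of_lt] <;> simp [Fin.lt_def] <;> omega

namespace SimpleGraph

section Lift

variable {V W : Type*} {G : SimpleGraph V} {G' : SimpleGraph W}

lemma Reachable.lift (f : V → W) (hf : ∀ a b, G.Adj a b → G'.Reachable (f a) (f b)) {a b : V}
    (h : G.Reachable a b) : G'.Reachable (f a) (f b) := by
  obtain ⟨w⟩ := h
  induction w with
  | nil => rfl
  | cons ha _ ih => exact (hf _ _ ha).trans ih

lemma Connected.of_lift (hG : G.Connected) (f : V → W)
    (hf : ∀ a b, G.Adj a b → G'.Reachable (f a) (f b))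
    (hcover : ∀ w, ∃ v, G'.Reachable w (f v)) : G'.Connected := by
  have : Nonempty W := hG.nonempty.map f
  refine Connected.mk fun w w' => ?_
  obtain ⟨v, hv⟩ := hcover w
  obtain ⟨v', hv'⟩ := hcover w'
  exact hv.trans (((hG.preconnected v v').lift f hf).trans hv'.symm)

end Lift

variable {V : Type} {G : SimpleGraph V}

def IsTwoConnected (G : SimpleGraph V) : Prop :=
  3 ≤ Nat.card V ∧ ∀ v, (G.induce {u | u ≠ v}).Connected

namespace IsTwoConnected

lemma preconnected (hG : G.IsTwoConnected) : G.Preconnected := fun p q => by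
  obtain ⟨z, hzp, hzq⟩ := exists_ne_ne_of_three_le_card hG.1 p q
  exact ((hG.2 z).preconnected ⟨p, hzp.symm⟩ ⟨q, hzq.symm⟩).map (Embedding.induce _).toHom

lemma exists_adj_ne (hG : G.IsTwoConnected) {x y : V} (hxy : x ≠ y) :
    ∃ w, G.Adj x w ∧ w ≠ y := by
  obtain ⟨z, hzx, hzy⟩ := exists_ne_ne_of_three_le_card hG.1 x y
  obtain ⟨walk⟩ := (hG.2 y).preconnected ⟨x, hxy⟩ ⟨z, hzy⟩
  cases walk with
  | nil => exact absurd rfl hzx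
  | @cons _ w _ ha _ => exact ⟨w, ha, w.2⟩

lemma preconnected_deleteEdges (hG : G.IsTwoConnected) {u v : V} (huv : u ≠ v) :
    (G.deleteEdges {s(u, v)}).Preconnected := by
  obtain ⟨w, huw, hwv⟩ := hG.exists_adj_ne huv
  refine (Connected.of_lift (hG.2 u) Subtype.val (fun a b hab => ?_) fun x => ?_).preconnected
  · refine Adj.reachable (deleteEdges_adj.mpr ⟨hab, ?_⟩)
    simp only [Set.mem_singleton_iff, Sym2.eq_iff, not_or, not_and]
    exact ⟨fun h => absurd h a.2, fun _ h => absurd h b.2⟩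
  · by_cases hx : x = u
    · subst hx
      exact ⟨⟨w, huw.ne'⟩, Adj.reachable (deleteEdges_adj.mpr ⟨huw, by simp [hwv, huv]⟩)⟩
    · exact ⟨⟨x, hx⟩, .rfl⟩

end IsTwoConnected

end SimpleGraph

section Subdivision

variable {V : Type} {H : SimpleGraph V} {u v p q : V}

@[simp]
lemma subdivideEdge_adj_some_some :
    (subdivideEdge H u v).Adj (some p) (some q) ↔ H.Adj p q ∧ s(p, q) ≠ s(u, v) := by
  simp only [subdivideEdge, fromRel_adj]
  aesop (add simp H.adj_comm)

@[simp]
lemma subdivideEdge_adj_none_some : (subdivideEdge H u v).Adj none (some q) ↔ q = u ∨ q = v := by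
  simp [subdivideEdge]

@[simp]
lemma subdivideEdge_adj_some_none : (subdivideEdge H u v).Adj (some p) none ↔ p = u ∨ p = v := by
  simp [subdivideEdge]

end Subdivision

namespace SimpleGraph

variable {V : Type}

def addVertex (H : SimpleGraph V) (S : Set V) : SimpleGraph (Option V) where
  Adj
    | some p, some q => H.Adj p q
    | none, some q => q ∈ S
    | some p, none => p ∈ S
    | none, none => False
  symm := ⟨by
    rintro (_ | p) (_ | q) h
    exacts [h, h, h, h.symm]⟩
  loopless := ⟨by
    rintro (_ | p) h
    exacts [h, H.loopless.irrefl p h]⟩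

variable {H : SimpleGraph V} {S : Set V} {p q : V}

@[simp] lemma addVertex_adj_some_some : (H.addVertex S).Adj (some p) (some q) ↔ H.Adj p q := .rfl
@[simp] lemma addVertex_adj_none_some : (H.addVertex S).Adj none (some q) ↔ q ∈ S := .rfl
@[simp] lemma addVertex_adj_some_none : (H.addVertex S).Adj (some p) none ↔ p ∈ S := .rfl

end SimpleGraph

namespace SimpleGraph.IsTwoConnected

variable {V : Type} {G : SimpleGraph V}

lemma three_le_card_option (hG : G.IsTwoConnected) : 3 ≤ Nat.card (Option V) := by
  have : Finite V := Nat.finite_of_card_ne_zero (by have := hG.1; omega)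
  rw [Finite.card_option]
  exact hG.1.trans (Nat.le_succ _)

lemma subdivideEdge (hG : G.IsTwoConnected) {u v : V} (huv : u ≠ v) :
    (subdivideEdge G u v).IsTwoConnected := by
  refine ⟨hG.three_le_card_option, ?_⟩
  rintro (_ | x)
  · have : Nonempty V := ⟨u⟩
    refine (Connected.mk (hG.preconnected_deleteEdges huv)).of_lift
      (fun p => ⟨some p, by simp⟩) (fun a b hab => ?_) ?_
    · rw [deleteEdges_adj, Set.mem_singleton_iff] at hab
      exact Adj.reachable (by simpa using hab)
    · rintro ⟨_ | p, hp⟩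
      · exact absurd rfl hp
      · exact ⟨p, .rfl⟩
  · have hnone : (none : Option V) ∈ {y | y ≠ some x} := by simp
    refine (hG.2 x).of_lift (fun t => ⟨some t, mt Option.some_inj.mp t.2⟩) (fun a b hab => ?_) ?_
    · by_cases he : s((a : V), b) = s(u, v)
      · have ha : (a : V) = u ∨ (a : V) = v :=
          Sym2.mem_iff.mp (he ▸ Sym2.mem_mk_left _ _)
        have hb : (b : V) = u ∨ (b : V) = v :=
          Sym2.mem_iff.mp (he ▸ Sym2.mem_mk_right _ _)
        exact (Adj.reachable (v := ⟨none, hnone⟩) (by simpa using ha)).trans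
          (Adj.reachable (by simpa using hb))
      · exact Adj.reachable (by simpa [he] using hab)
    · rintro ⟨_ | p, hp⟩
      · obtain ⟨c, hc, hcx⟩ : ∃ c, (c = u ∨ c = v) ∧ c ≠ x := by
          by_cases hux : u = x
          · exact ⟨v, .inr rfl, hux ▸ huv.symm⟩
          · exact ⟨u, .inl rfl, hux⟩
        exact ⟨⟨c, hcx⟩, Adj.reachable (by simpa using hc)⟩
      · exact ⟨⟨p, by simpa using hp⟩, .rfl⟩

lemma addVertex (hG : G.IsTwoConnected) {S : Set V} {s₁ s₂ : V} (h₁ : s₁ ∈ S) (h₂ : s₂ ∈ S)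
    (hne : s₁ ≠ s₂) : (G.addVertex S).IsTwoConnected := by
  refine ⟨hG.three_le_card_option, ?_⟩
  rintro (_ | x)
  · have : Nonempty V := ⟨s₁⟩
    refine (Connected.mk hG.preconnected).of_lift (fun p => ⟨some p, by simp⟩)
      (fun a b hab => Adj.reachable (by simpa using hab)) ?_
    rintro ⟨_ | p, hp⟩
    · exact absurd rfl hp
    · exact ⟨p, .rfl⟩
  · refine (hG.2 x).of_lift (fun t => ⟨some t, mt Option.some_inj.mp t.2⟩)
      (fun a b hab => Adj.reachable (by simpa using hab)) ?_
    rintro ⟨_ | p, hp⟩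
    · obtain ⟨s, hs, hsx⟩ : ∃ s ∈ S, s ≠ x := by
        by_cases h₁x : s₁ = x
        · exact ⟨s₂, h₂, h₁x ▸ hne.symm⟩
        · exact ⟨s₁, h₁, h₁x⟩
      exact ⟨⟨s, hsx⟩, Adj.reachable (by simpa using hs)⟩
    · exact ⟨⟨p, by simpa using hp⟩, .rfl⟩

end SimpleGraph.IsTwoConnected

namespace SimpleGraph

variable {V W : Type}

lemma IsTwoConnected.of_iso {G : SimpleGraph V} {G' : SimpleGraph W} (e : G ≃g G')
    (h : G'.IsTwoConnected) : G.IsTwoConnected := by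
  refine ⟨Nat.card_congr e.toEquiv ▸ h.1, fun v => ?_⟩
  have hbij : Set.BijOn e {u | u ≠ v} {w | w ≠ e v} := by
    refine ⟨fun u hu => e.injective.ne hu, e.injective.injOn, fun w hw => ⟨e.symm w, ?_, by simp⟩⟩
    rintro rfl
    simp at hw
  exact (e.induce hbij).connected_iff.mpr (h.2 (e v))

lemma isTwoConnected_top (h : 3 ≤ Nat.card V) : (⊤ : SimpleGraph V).IsTwoConnected := by
  refine ⟨h, fun v => ?_⟩
  obtain ⟨z, hz, -⟩ := exists_ne_ne_of_three_le_card h v v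
  have : Nonempty {u | u ≠ v} := ⟨⟨z, hz⟩⟩
  simp

lemma isTwoConnected_cycleGraph (n : ℕ) : (cycleGraph (n + 3)).IsTwoConnected := by
  refine ⟨by simp, fun v => (pathGraph_connected (n + 1)).of_lift
    (fun k => ⟨v + k.succ, by simp⟩) (fun a b hab => ?_) fun x => ?_⟩
  · refine Adj.reachable ?_
    rw [pathGraph_adj] at hab
    simp only [induce_adj, cycleGraph_adj, add_sub_add_left_eq_sub]
    exact hab.symm.imp Fin.succ_sub_succ_eq_one Fin.succ_sub_succ_eq_one
  · obtain ⟨k, hk⟩ := Fin.exists_succ_eq.mpr (sub_ne_zero.mpr x.2)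
    exact ⟨k, by simp [hk]⟩

end SimpleGraph

/-- `inr 0` and `inr 1` go to the vertices created by the first and the second subdivision,
`inr 2` to the vertex added last. -/
def sumFinThreeEquiv (V : Type) : V ⊕ Fin 3 ≃ Option (Option (Option V)) where
  toFun := Sum.elim (fun p => some (some (some p))) ![some (some none), some none, none]
  invFun
    | none => .inr 2
    | some none => .inr 1
    | some (some none) => .inr 0
    | some (some (some p)) => .inl p
  left_inv := by
    rintro (p | i)
    · rfl
    · fin_cases i <;> rfl
  right_inv := by rintro (_ | _ | _ | p) <;> rfl

section CircOp

open SimpleGraph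

variable {V : Type} (H : SimpleGraph V)

def circOpTwoIso (u₁ v₁ u₂ v₂ a : V) :
    circOpTwo H u₁ v₁ u₂ v₂ a ≃g
      (subdivideEdge (subdivideEdge H u₁ v₁) (some u₂) (some v₂)).addVertex
        {some (some a), some none, none} where
  toEquiv := sumFinThreeEquiv V
  map_rel_iff' := by
    rintro (p | i) (q | j)
    all_goals try fin_cases i
    all_goals try fin_cases j
    all_goals simp [sumFinThreeEquiv, circOpTwo]
    aesop (add simp H.adj_comm)

def circOpOneIso {u v : V} (huv : u ≠ v) (a : V) :
    circOpOne H u v a ≃g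
      (subdivideEdge (subdivideEdge H u v) none (some v)).addVertex
        {some (some a), some none, none} where
  toEquiv := sumFinThreeEquiv V
  map_rel_iff' := by
    rintro (p | i) (q | j)
    all_goals try fin_cases i
    all_goals try fin_cases j
    all_goals simp [sumFinThreeEquiv, circOpOne]
    all_goals aesop (add simp H.adj_comm)

end CircOp

namespace SimpleGraph.IsTwoConnected

variable {V : Type} {H : SimpleGraph V}

lemma circOpTwo (hH : H.IsTwoConnected) {u₁ v₁ u₂ v₂ : V} (h₁ : u₁ ≠ v₁) (h₂ : u₂ ≠ v₂) (a : V) :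
    (circOpTwo H u₁ v₁ u₂ v₂ a).IsTwoConnected :=
  (((hH.subdivideEdge h₁).subdivideEdge (Option.some_injective _ |>.ne h₂)).addVertex
    (s₁ := some none) (s₂ := none) (by simp) (by simp) (by simp)).of_iso (circOpTwoIso H _ _ _ _ a)

lemma circOpOne (hH : H.IsTwoConnected) {u v : V} (huv : u ≠ v) (a : V) :
    (circOpOne H u v a).IsTwoConnected :=
  (((hH.subdivideEdge huv).subdivideEdge (Option.some_ne_none v).symm).addVertex
    (s₁ := some none) (s₂ := none) (by simp) (by simp) (by simp)).of_iso (circOpOneIso H huv a)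

end SimpleGraph.IsTwoConnected

theorem IsInF.isTwoConnected {i j : ℕ} {V : Type} {G : SimpleGraph V} (hG : IsInF i j G) :
    G.IsTwoConnected := by
  induction hG with
  | cycle i hi =>
    obtain ⟨n, rfl⟩ := Nat.exists_eq_add_of_le' hi
    exact isTwoConnected_cycleGraph n
  | k4 => exact isTwoConnected_top (by simp)
  | subdiv huv _ ih => exact ih.subdivideEdge huv.ne
  | op _ hop _ ih =>
    rcases hop with ⟨u₁, v₁, u₂, v₂, h₁, h₂, -, rfl⟩ | ⟨u, v, huv, rfl⟩
    · exact ih.circOpTwo h₁.ne h₂.ne _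
    · exact ih.circOpOne huv.ne _
  | iso e _ ih => exact ih.of_iso e.some

theorem statement_4_general (i j : ℕ) {V : Type} (G : SimpleGraph V)
    (hG : IsInF i j G) :
    3 ≤ Nat.card V ∧ ∀ v : V, (G.induce {u : V | u ≠ v}).Connected :=
  hG.isTwoConnected

/-- For `i ≥ 1` and `0 ≤ j ≤ i`, every `G ∈ F_{i,j}` is 2-connected: it has at
least three vertices and deleting any single vertex leaves the graph connected. -/
theorem statement_4 (i j : ℕ) (hi : 1 ≤ i) (hj : j ≤ i) {V : Type} (G : SimpleGraph V)
    (hG : IsInF i j G) :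
    3 ≤ Nat.card V ∧ ∀ v : V, (G.induce {u : V | u ≠ v}).Connected :=
  statement_4_general i j G hG
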